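/- The piecewise formula defining η⁺₁ is unambiguous and continuous: the expressions given for the regimes |t| ≤ 1/3, 1/3 ≤ |t| ≤ 2/3 and |t| ≥ 2/3 agree whenever |t| = 1/3 or |t| = 2/3, the two sign choices agree at t = 0, and all interval endpoints depend continuously on t. Moreover η⁺₁(t) ∈ X for every t ∈ [−1,1] (the four rectangles have pairwise disjoint interiors and satisfy the Swiss-Cheese constraints), and η⁺₁(1) is obtained from η⁺₁(−1) by interchanging the rectangles C₁ and C₂. Consequently the concatenation of the path η⁺₁ with the path t ↦ swap(η⁺₁(t)) (swap interchanging C₁ and C₂) is a loop in X. (This is the geometric content of the lemma stating that the 1-chain η₁ is closed.) -/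
import Mathlib


/-- A 4-tuple of rectangles `(C₁, C₂, O₋, O₊)` in `ℝ²`, each recorded by the endpoints of
its two defining intervals: index `0` is `C₁`, `1` is `C₂`, `2` is `O₋`, `3` is `O₊`; the
entry at each index is `((a₀, b₀), (a₁, b₁))`, standing for `[a₀,b₀] × [a₁,b₁]`. -/
abbrev Cfg : Type := Fin 4 → (ℝ × ℝ) × (ℝ × ℝ)

/-- The rectangle `[a₀,b₀] × [a₁,b₁]` determined by the endpoint data `r = ((a₀,b₀),(a₁,b₁))`. -/
def rect (r : (ℝ × ℝ) × (ℝ × ℝ)) : Set (ℝ × ℝ) :=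
  Set.Icc r.1.1 r.1.2 ×ˢ Set.Icc r.2.1 r.2.2

/-- The space `X` of 4-tuples `(C₁, C₂, O₋, O₊)` of rectangles (products of two nondegenerate
closed intervals) contained in `[-1,1]²`, with pairwise disjoint interiors, such that the
first intervals of `C₁` and `C₂` are contained in `[0,1]` and the first intervals of `O₋`
and `O₊` have left endpoint `0`.  It is topologized as a subspace of `ℝ^16` via the interval
endpoints. -/
def Xcfg : Set Cfg :=
  {x | (∀ k, (x k).1.1 < (x k).1.2 ∧ (x k).2.1 < (x k).2.2) ∧
       (∀ k, -1 ≤ (x k).1.1 ∧ (x k).1.2 ≤ 1 ∧ -1 ≤ (x k).2.1 ∧ (x k).2.2 ≤ 1) ∧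
       (∀ k l, k ≠ l → Disjoint (interior (rect (x k))) (interior (rect (x l)))) ∧
       (0 ≤ (x 0).1.1 ∧ (x 0).1.2 ≤ 1) ∧ (0 ≤ (x 1).1.1 ∧ (x 1).1.2 ≤ 1) ∧
       (x 2).1.1 = 0 ∧ (x 3).1.1 = 0}

/-- Interchanging the two closed rectangles `C₁` and `C₂` of a configuration. -/
def swapC (x : Cfg) : Cfg := fun k => x (Equiv.swap (0 : Fin 4) 1 k)

/-- `J(+) = [0,1]` and `J(-) = [-1,0]` (`true` is `+`, `false` is `-`). -/
def Jb (b : Bool) : ℝ × ℝ := if b then (0, 1) else (-1, 0)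

/-- `T(u) = max(1/2, (1+u)/2)`. -/
noncomputable def Tf (u : ℝ) : ℝ := max (1/2) ((1 + u) / 2)

/-- `I₊(u) = [min(0,u), 1]` and `I₋(u) = [-1, -min(0,u)]`. -/
noncomputable def Ib (b : Bool) (u : ℝ) : ℝ × ℝ :=
  if b then (min 0 u, 1) else (-1, -min 0 u)

/-- The regime `|t| ≤ 1/3` of `η⁺₁`, with sign `b` and parameter `u = 6|t| - 1`:
`C₁ = [1/2,1] × [-1,1]`, `C₂ = [1/4,1/2] × I_b(u)`, `O_b = [0,1/4] × J(b)`,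
`O_{-b} = [0, T(u)/2] × J(-b)`. -/
noncomputable def etaIn (b : Bool) (u : ℝ) : Cfg := fun k =>
  if k = 0 then ((1/2, 1), (-1, 1))
  else if k = 1 then ((1/4, 1/2), Ib b u)
  else if k = 2 then ((0, if b then Tf u / 2 else 1/4), Jb false)
  else ((0, if b then 1/4 else Tf u / 2), Jb true)

/-- The regime `1/3 ≤ |t| ≤ 2/3` of `η⁺₁`, with sign `b` and parameter `u = 6|t| - 3`:
`C₁ = [1/2,1] × I_{-b}(u)`, `C₂ = [T(u)/2, T(u)] × J(b)`, `O_b = [0, T(u)/2] × J(b)`,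
`O_{-b} = [0,1/2] × J(-b)`. -/
noncomputable def etaMid (b : Bool) (u : ℝ) : Cfg := fun k =>
  if k = 0 then ((1/2, 1), Ib (!b) u)
  else if k = 1 then ((Tf u / 2, Tf u), Jb b)
  else if k = 2 then ((0, if b then 1/2 else Tf u / 2), Jb false)
  else ((0, if b then Tf u / 2 else 1/2), Jb true)

/-- The regime `|t| ≥ 2/3` of `η⁺₁`, with sign `b`:
`C₁ = [1/2,1] × J(-b)`, `C₂ = [1/2,1] × J(b)`, `O₋ = [0,1/2] × J(-)`,
`O₊ = [0,1/2] × J(+)`. -/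
noncomputable def etaOut (b : Bool) : Cfg := fun k =>
  if k = 0 then ((1/2, 1), Jb (!b))
  else if k = 1 then ((1/2, 1), Jb b)
  else if k = 2 then ((0, 1/2), Jb false)
  else ((0, 1/2), Jb true)

/-- The path `η⁺₁ : [-1,1] → X`, assembled from the three regimes, with sign
`b = (0 ≤ t)`. -/
noncomputable def etaP (t : ℝ) : Cfg :=
  if |t| ≤ 1/3 then etaIn (decide (0 ≤ t)) (6 * |t| - 1)
  else if |t| ≤ 2/3 then etaMid (decide (0 ≤ t)) (6 * |t| - 3)
  else etaOut (decide (0 ≤ t))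

/-- The path `L(t) = α₁(ℓ⁺₁(t), μ₁)`, with `M = |2t|`:
`C₁ = [(13-M)/16, (15-M)/16] × [(-1-2t)/4, (1-2t)/4]`,
`C₂ = [(9+M)/16, (11+M)/16] × [(-1+2t)/4, (1+2t)/4]`,
`O₋ = [0,1/2] × [-1,0]`, `O₊ = [0,1/2] × [0,1]`. -/
noncomputable def Lmap (t : ℝ) : Cfg := fun k =>
  if k = 0 then (((13 - |2*t|)/16, (15 - |2*t|)/16), ((-1 - 2*t)/4, (1 - 2*t)/4))
  else if k = 1 then (((9 + |2*t|)/16, (11 + |2*t|)/16), ((-1 + 2*t)/4, (1 + 2*t)/4))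
  else if k = 2 then ((0, 1/2), (-1, 0))
  else ((0, 1/2), (0, 1))

open Set
set_option maxHeartbeats 1000000

lemma interior_rect (r : (ℝ × ℝ) × (ℝ × ℝ)) :
    interior (rect r) = Set.Ioo r.1.1 r.1.2 ×ˢ Set.Ioo r.2.1 r.2.2 := by
  rw [rect, interior_prod_eq, interior_Icc, interior_Icc]

lemma disj4 {r s : (ℝ × ℝ) × (ℝ × ℝ)}
    (h : r.1.2 ≤ s.1.1 ∨ s.1.2 ≤ r.1.1 ∨ r.2.2 ≤ s.2.1 ∨ s.2.2 ≤ r.2.1) :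
    Disjoint (interior (rect r)) (interior (rect s)) := by
  rw [interior_rect, interior_rect]
  refine Set.disjoint_left.2 fun p hp hq => ?_
  rcases h with h | h | h | h
  · exact lt_irrefl p.1 ((hp.1.2.trans_le h).trans hq.1.1)
  · exact lt_irrefl p.1 ((hq.1.2.trans_le h).trans hp.1.1)
  · exact lt_irrefl p.2 ((hp.2.2.trans_le h).trans hq.2.1)
  · exact lt_irrefl p.2 ((hq.2.2.trans_le h).trans hp.2.1)

lemma etaIn_mem (b : Bool) {u : ℝ} (h1 : -1 ≤ u) (h2 : u ≤ 1) : etaIn b u ∈ Xcfg := by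
  rcases le_total u 0 with hu0 | hu0
  · have hT : Tf u = 1/2 := max_eq_left (by linarith)
    have hm : min 0 u = u := min_eq_right hu0
    cases b <;>
      refine ⟨fun k => ?_, fun k => ?_, fun k l hkl => ?_, ⟨?_, ?_⟩, ⟨?_, ?_⟩, ?_, ?_⟩ <;>
      try fin_cases k <;> try fin_cases l
    all_goals simp_all [etaIn, Ib, Jb, hT, hm]
    all_goals first
      | (refine disj4 ?_; norm_num; try linarith)
      | linarith
      | (norm_num; all_goals linarith)
      | norm_num
  · have hT : Tf u = (1+u)/2 := max_eq_right (by linarith)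
    have hm : min 0 u = 0 := min_eq_left hu0
    cases b <;>
      refine ⟨fun k => ?_, fun k => ?_, fun k l hkl => ?_, ⟨?_, ?_⟩, ⟨?_, ?_⟩, ?_, ?_⟩ <;>
      try fin_cases k <;> try fin_cases l
    all_goals simp_all [etaIn, Ib, Jb, hT, hm]
    all_goals first
      | (refine disj4 ?_; norm_num; try linarith)
      | linarith
      | (norm_num; all_goals linarith)
      | norm_num

lemma etaMid_mem (b : Bool) {u : ℝ} (h1 : -1 ≤ u) (h2 : u ≤ 1) : etaMid b u ∈ Xcfg := by
  rcases le_total u 0 with hu0 | hu0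
  · have hT : Tf u = 1/2 := max_eq_left (by linarith)
    have hm : min 0 u = u := min_eq_right hu0
    cases b <;>
      refine ⟨fun k => ?_, fun k => ?_, fun k l hkl => ?_, ⟨?_, ?_⟩, ⟨?_, ?_⟩, ?_, ?_⟩ <;>
      try fin_cases k <;> try fin_cases l
    all_goals simp_all [etaMid, Ib, Jb, hT, hm]
    all_goals first
      | (refine disj4 ?_; norm_num; try linarith)
      | linarith
      | (constructor <;> linarith)
      | (norm_num; all_goals linarith)
  · have hT : Tf u = (1+u)/2 := max_eq_right (by linarith)
    have hm : min 0 u = 0 := min_eq_left hu0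
    cases b <;>
      refine ⟨fun k => ?_, fun k => ?_, fun k l hkl => ?_, ⟨?_, ?_⟩, ⟨?_, ?_⟩, ?_, ?_⟩ <;>
      try fin_cases k <;> try fin_cases l
    all_goals simp_all [etaMid, Ib, Jb, hT, hm]
    all_goals first
      | (refine disj4 ?_; norm_num; try linarith)
      | linarith
      | (constructor <;> linarith)
      | (norm_num; all_goals linarith)

lemma etaOut_mem (b : Bool) : etaOut b ∈ Xcfg := by
  cases b <;>
    refine ⟨fun k => ?_, fun k => ?_, fun k l hkl => ?_, ⟨?_, ?_⟩, ⟨?_, ?_⟩, ?_, ?_⟩ <;>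
    try fin_cases k <;> try fin_cases l
  all_goals simp_all [etaOut, Jb]
  all_goals first
    | (refine disj4 ?_; norm_num)
    | norm_num

lemma agree1 (b : Bool) : etaIn b 1 = etaMid b (-1) := by
  funext k; fin_cases k <;> cases b <;>
    simp [etaIn, etaMid, Ib, Jb, Tf] <;> norm_num

lemma agree2 (b : Bool) : etaMid b 1 = etaOut b := by
  funext k; fin_cases k <;> cases b <;>
    simp [etaMid, etaOut, Ib, Jb, Tf] <;> norm_num

lemma agree0 : etaIn true (-1) = etaIn false (-1) := by
  funext k; fin_cases k <;>
    simp [etaIn, Ib, Jb, Tf] <;> norm_num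

lemma cont_etaIn (b : Bool) : Continuous (etaIn b) := by
  apply continuous_pi; intro k
  fin_cases k <;> cases b <;> simp [etaIn, Ib, Jb, Tf, continuous_prodMk] <;>
    (repeat' apply And.intro) <;> fun_prop

lemma cont_etaMid (b : Bool) : Continuous (etaMid b) := by
  apply continuous_pi; intro k
  fin_cases k <;> cases b <;> simp [etaMid, Ib, Jb, Tf, continuous_prodMk] <;>
    (repeat' apply And.intro) <;> fun_prop

noncomputable def etaHalf (b : Bool) (t : ℝ) : Cfg :=
  if t ≤ 1/3 then etaIn b (6*t-1) else if t ≤ 2/3 then etaMid b (6*t-3) else etaOut b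

lemma cont_etaHalf (b : Bool) : Continuous (etaHalf b) := by
  unfold etaHalf
  apply Continuous.if_le
  · exact (cont_etaIn b).comp (by fun_prop)
  · apply Continuous.if_le
    · exact (cont_etaMid b).comp (by fun_prop)
    · exact continuous_const
    · exact continuous_id
    · exact continuous_const
    · intro x hx; subst hx
      rw [show 6*(2/3 : ℝ)-3 = 1 by norm_num, agree2]
  · exact continuous_id
  · exact continuous_const
  · intro x hx; subst hx
    rw [if_pos (by norm_num : (1/3:ℝ) ≤ 2/3)]
    rw [show 6*(1/3 : ℝ)-1 = 1 by norm_num, show 6*(1/3 : ℝ)-3 = -1 by norm_num, agree1]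

lemma etaP_eq : etaP = fun t => if t ≤ 0 then etaHalf false (-t) else etaHalf true t := by
  funext t
  rcases lt_trichotomy t 0 with h | h | h
  · have ha : |t| = -t := abs_of_neg h
    have hb : decide (0 ≤ t) = false := decide_eq_false (by linarith)
    rw [etaP, ha, hb, if_pos h.le]; rfl
  · subst h
    have hb : decide ((0:ℝ) ≤ 0) = true := decide_eq_true le_rfl
    rw [etaP, hb, if_pos le_rfl]
    norm_num [etaHalf, agree0]
  · have ha : |t| = t := abs_of_pos h
    have hb : decide (0 ≤ t) = true := decide_eq_true h.le
    rw [etaP, ha, hb, if_neg (not_le.2 h)]; rfl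

lemma cont_etaP : Continuous etaP := by
  rw [etaP_eq]
  apply Continuous.if_le
  · exact (cont_etaHalf false).comp continuous_neg
  · exact cont_etaHalf true
  · exact continuous_id
  · exact continuous_const
  · intro x hx; subst hx
    rw [show -(0:ℝ) = 0 by norm_num]
    unfold etaHalf
    rw [if_pos (by norm_num : (0:ℝ) ≤ 1/3), if_pos (by norm_num : (0:ℝ) ≤ 1/3)]
    rw [show 6*(0:ℝ)-1 = -1 by norm_num, agree0]

lemma etaP_mem (t : ℝ) (ht : t ∈ Set.Icc (-1:ℝ) 1) : etaP t ∈ Xcfg := by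
  have h0 := abs_nonneg t
  have h1 : |t| ≤ 1 := abs_le.2 ⟨ht.1, ht.2⟩
  rw [etaP]
  split_ifs with hA hB
  · exact etaIn_mem _ (by linarith) (by linarith)
  · push_neg at hA
    exact etaMid_mem _ (by linarith) (by linarith)
  · exact etaOut_mem _

lemma swap_val0 : Equiv.swap (0 : Fin 4) 1 0 = 1 := Equiv.swap_apply_left _ _
lemma swap_val1 : Equiv.swap (0 : Fin 4) 1 1 = 0 := Equiv.swap_apply_right _ _
lemma swap_val2 : Equiv.swap (0 : Fin 4) 1 2 = 2 :=
  Equiv.swap_apply_of_ne_of_ne (by decide) (by decide)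
lemma swap_val3 : Equiv.swap (0 : Fin 4) 1 3 = 3 :=
  Equiv.swap_apply_of_ne_of_ne (by decide) (by decide)

lemma swapC_swapC (x : Cfg) : swapC (swapC x) = x := by
  funext k; simp [swapC, Equiv.swap_apply_self]

lemma swapC_mem {x : Cfg} (hx : x ∈ Xcfg) : swapC x ∈ Xcfg := by
  obtain ⟨hA, hB, hC, hD, hE, hF, hG⟩ := hx
  refine ⟨fun k => hA _, fun k => hB _,
    fun k l hkl => hC _ _ (fun h => hkl ((Equiv.swap 0 1).injective h)), ?_, ?_, ?_, ?_⟩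
  · show 0 ≤ (x (Equiv.swap (0 : Fin 4) 1 0)).1.1 ∧ (x (Equiv.swap (0 : Fin 4) 1 0)).1.2 ≤ 1
    rw [swap_val0]; exact hE
  · show 0 ≤ (x (Equiv.swap (0 : Fin 4) 1 1)).1.1 ∧ (x (Equiv.swap (0 : Fin 4) 1 1)).1.2 ≤ 1
    rw [swap_val1]; exact hD
  · show (x (Equiv.swap (0 : Fin 4) 1 2)).1.1 = 0
    rw [swap_val2]; exact hF
  · show (x (Equiv.swap (0 : Fin 4) 1 3)).1.1 = 0
    rw [swap_val3]; exact hG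

lemma etaP_one : etaP 1 = etaOut true := by
  have hb : decide ((0:ℝ) ≤ 1) = true := decide_eq_true (by norm_num)
  rw [etaP, hb]
  norm_num

lemma etaP_negone : etaP (-1) = etaOut false := by
  have hb : decide ((0:ℝ) ≤ -1) = false := decide_eq_false (by norm_num)
  rw [etaP, hb]
  norm_num

lemma endpt : etaP 1 = swapC (etaP (-1)) := by
  rw [etaP_one, etaP_negone]
  funext k
  fin_cases k <;>
    simp [swapC, etaOut, swap_val0, swap_val1, swap_val2, swap_val3, Jb]

/-- The piecewise formula defining `η⁺₁` is unambiguous and continuous: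
the regime formulas agree whenever `|t| = 1/3` or `|t| = 2/3`, the two sign choices agree
at `t = 0`, and all interval endpoints depend continuously on `t`.  Moreover
`η⁺₁(t) ∈ X` for every `t ∈ [-1,1]`, and `η⁺₁(1)` is obtained from `η⁺₁(-1)` by
interchanging `C₁` and `C₂`.  Consequently the concatenation of `η⁺₁` with its
closed-label swap is a loop in `X`. -/
theorem stmt12 :
    -- unambiguity of the piecewise formula
    (∀ b : Bool, etaIn b 1 = etaMid b (-1)) ∧
    (∀ b : Bool, etaMid b 1 = etaOut b) ∧
    etaIn true (-1) = etaIn false (-1) ∧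
    -- continuity
    Continuous etaP ∧
    -- η⁺₁ lands in X
    (∀ t ∈ Set.Icc (-1 : ℝ) 1, etaP t ∈ Xcfg) ∧
    -- the endpoint relation
    etaP 1 = swapC (etaP (-1)) ∧
    -- consequently, the concatenation with the closed-label swap is a loop in X
    (Continuous (fun t : ℝ => if t ≤ 0 then etaP (2*t + 1) else swapC (etaP (2*t - 1))) ∧
     (fun t : ℝ => if t ≤ 0 then etaP (2*t + 1) else swapC (etaP (2*t - 1))) (-1) =
       (fun t : ℝ => if t ≤ 0 then etaP (2*t + 1) else swapC (etaP (2*t - 1))) 1 ∧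
     ∀ t ∈ Set.Icc (-1 : ℝ) 1,
       (fun t : ℝ => if t ≤ 0 then etaP (2*t + 1) else swapC (etaP (2*t - 1))) t ∈ Xcfg) := by
  have csw : Continuous (fun y : Cfg => swapC y) :=
    continuous_pi fun k => continuous_apply _
  refine ⟨agree1, agree2, agree0, cont_etaP, etaP_mem, endpt, ?_, ?_, ?_⟩
  · apply Continuous.if_le
    · exact cont_etaP.comp (by fun_prop)
    · exact csw.comp (cont_etaP.comp (by fun_prop))
    · exact continuous_id
    · exact continuous_const
    · intro x hx; subst hx
      norm_num [endpt]
  · simp only []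
    rw [if_pos (by norm_num : (-1:ℝ) ≤ 0), if_neg (by norm_num : ¬(1:ℝ) ≤ 0)]
    rw [show 2*(-1:ℝ)+1 = -1 by norm_num, show 2*(1:ℝ)-1 = 1 by norm_num]
    rw [endpt, swapC_swapC]
  · intro t ht
    simp only []
    split_ifs with h
    · exact etaP_mem _ ⟨by linarith [ht.1], by linarith [ht.2]⟩
    · exact swapC_mem (etaP_mem _ ⟨by linarith [ht.1], by linarith [ht.2]⟩)
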